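/- Let G=(V,E) be a finite graph with thresholds t:V→ℕ satisfying 1 ≤ t(v) ≤ d_G(v) for all v, and let G'=(V',E') be the gadget graph of G. If s is a target vector for G', then S = {v ∈ V : there exists u ∈ V'_v with s(u) > 0} is a target set for G, and |S| ≤ C(s) = Σ_{u∈V'} s(u). -/

import Mathlib

/-- Vertices of the gadget graph `G'` of `G`: for each `v ∈ V` the gadget `Λ_v` has
vertex set `{v', v'', v_1, …, v_{d_G(v)}}`, encoded as `Σ v : V, Fin (d_G(v) + 2)`,
where index `0` encodes `v'`, index `1` encodes `v''`, and indices `2, …, d_G(v)+1`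
encode the internal vertices `v_1, …, v_{d_G(v)}`. -/
abbrev GadgetVert {V : Type*} [Fintype V] (G : SimpleGraph V) [DecidableRel G.Adj] : Type _ :=
  Σ v : V, Fin (G.degree v + 2)

/-- Adjacency of the gadget graph: `u'` and `w'` are adjacent whenever `u` and `w` are
adjacent in `G`; inside each gadget `Λ_v`, the vertices `v'` and `v''` are joined by the
internally disjoint paths `(v', v_i, v'')`, `i = 1, …, d_G(v)`. -/
def gadgetAdj {V : Type*} [Fintype V] (G : SimpleGraph V) [DecidableRel G.Adj]
    (a b : GadgetVert G) : Prop :=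
  ((a.2 : ℕ) = 0 ∧ (b.2 : ℕ) = 0 ∧ G.Adj a.1 b.1) ∨
  (a.1 = b.1 ∧
    (((a.2 : ℕ) = 0 ∧ 2 ≤ (b.2 : ℕ)) ∨ (2 ≤ (a.2 : ℕ) ∧ (b.2 : ℕ) = 0) ∨
     ((a.2 : ℕ) = 1 ∧ 2 ≤ (b.2 : ℕ)) ∨ (2 ≤ (a.2 : ℕ) ∧ (b.2 : ℕ) = 1)))

instance gadgetAdj.decidable {V : Type*} [Fintype V] [DecidableEq V]
    (G : SimpleGraph V) [DecidableRel G.Adj] : DecidableRel (gadgetAdj G) := fun a b => by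
  unfold gadgetAdj; infer_instance

/-- The gadget graph `G'` of `G`. -/
def gadgetGraph {V : Type*} [Fintype V] (G : SimpleGraph V) [DecidableRel G.Adj] :
    SimpleGraph (GadgetVert G) where
  Adj := gadgetAdj G
  symm := by
    constructor
    rintro ⟨v, i⟩ ⟨u, j⟩ (⟨hi, hj, hadj⟩ | ⟨rfl, h⟩)
    · exact Or.inl ⟨hj, hi, hadj.symm⟩
    · exact Or.inr ⟨rfl, by tauto⟩
  loopless := by
    constructor
    rintro ⟨v, i⟩ (⟨_, _, hadj⟩ | ⟨_, h⟩)
    · exact G.loopless.irrefl v hadj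
    · omega

instance {V : Type*} [Fintype V] [DecidableEq V] (G : SimpleGraph V) [DecidableRel G.Adj] :
    DecidableRel (gadgetGraph G).Adj :=
  fun a b => inferInstanceAs (Decidable (gadgetAdj G a b))

/-- The thresholds on the gadget graph: `v'` keeps the threshold `t v` of `v`, every
other vertex of the gadget `Λ_v` has threshold `1`. -/
def gadgetThreshold {V : Type*} [Fintype V] (G : SimpleGraph V) [DecidableRel G.Adj]
    (t : V → ℕ) (a : GadgetVert G) : ℕ :=
  if (a.2 : ℕ) = 0 then t a.1 else 1

/-- `activeVec G t s ℓ` : the set of vertices active at round `ℓ` of the activation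
process in `G` with thresholds `t`, starting with partial incentives `s`. -/
def activeVec {V : Type*} [Fintype V] [DecidableEq V] (G : SimpleGraph V) [DecidableRel G.Adj]
    (t s : V → ℕ) : ℕ → Finset V
  | 0 => Finset.univ.filter fun v => t v ≤ s v
  | ℓ + 1 =>
    activeVec G t s ℓ ∪
      Finset.univ.filter fun u => t u - s u ≤ (G.neighborFinset u ∩ activeVec G t s ℓ).card

/-- `s` is a target vector for `G` with thresholds `t`. -/
def isTargetVec {V : Type*} [Fintype V] [DecidableEq V] (G : SimpleGraph V) [DecidableRel G.Adj]
    (t s : V → ℕ) : Prop :=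
  ∃ ℓ, activeVec G t s ℓ = Finset.univ

/-- `activeSet G t S ℓ` : the set of vertices active at round `ℓ` of the activation
process in `G` with thresholds `t`, starting at the seed set `S`. -/
def activeSet {V : Type*} [Fintype V] [DecidableEq V] (G : SimpleGraph V) [DecidableRel G.Adj]
    (t : V → ℕ) (S : Finset V) : ℕ → Finset V
  | 0 => S
  | ℓ + 1 =>
    activeSet G t S ℓ ∪
      Finset.univ.filter fun u => t u ≤ (G.neighborFinset u ∩ activeSet G t S ℓ).card

/-- `S` is a target set for `G` with thresholds `t`. -/
def isTargetSet {V : Type*} [Fintype V] [DecidableEq V] (G : SimpleGraph V) [DecidableRel G.Adj]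
    (t : V → ℕ) (S : Finset V) : Prop :=
  ∃ ℓ, activeSet G t S ℓ = Finset.univ

/- By induction on `ℓ`, every vertex active at round `ℓ` of the gadget process lies in a gadget
`Λ_v` with `v` active at round `ℓ` of the process started at `S`. In a gadget without incentives
nothing is active at round `0`, as all thresholds are positive. Later, a vertex with an active
neighbour in its own gadget is covered by the induction hypothesis; any other vertex was activated
through neighbours `u'` with `u ∼ v` only, so it is `v'`, and these are `t(v)` active neighbours
of `v` in `G`. -/

open Finset

section Gadget

variable {V : Type*} [Fintype V] (G : SimpleGraph V) [DecidableRel G.Adj]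

/-- The set `S` of the paper. -/
def gadgetSupport (s : GadgetVert G → ℕ) : Finset V :=
  univ.filter fun v => ∃ i : Fin (G.degree v + 2), 0 < s ⟨v, i⟩

lemma eq_zero_of_fst_notMem_gadgetSupport {s : GadgetVert G → ℕ} {a : GadgetVert G}
    (ha : a.1 ∉ gadgetSupport G s) : s a = 0 := by
  by_contra h
  exact ha (mem_filter.2 ⟨mem_univ _, a.2, Nat.pos_of_ne_zero h⟩)

lemma gadgetThreshold_pos {t : V → ℕ} (ht : ∀ v, 1 ≤ t v) (a : GadgetVert G) :
    1 ≤ gadgetThreshold G t a := by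
  unfold gadgetThreshold
  split_ifs
  exacts [ht a.1, le_rfl]

lemma gadgetGraph_adj_of_fst_ne {a b : GadgetVert G} (hab : (gadgetGraph G).Adj a b)
    (hne : a.1 ≠ b.1) : (a.2 : ℕ) = 0 ∧ (b.2 : ℕ) = 0 ∧ G.Adj a.1 b.1 :=
  Or.resolve_right hab fun h => hne h.1

variable [DecidableEq V]

lemma activeVec_mono (t s : V → ℕ) : Monotone (activeVec G t s) :=
  monotone_nat_of_le_succ fun _ => subset_union_left

lemma activeSet_mono (t : V → ℕ) (S : Finset V) : Monotone (activeSet G t S) :=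
  monotone_nat_of_le_succ fun _ => subset_union_left

lemma subset_activeSet (t : V → ℕ) (S : Finset V) (ℓ : ℕ) : S ⊆ activeSet G t S ℓ :=
  activeSet_mono G t S (Nat.zero_le ℓ)

lemma mem_activeSet_succ_of_le_card {t : V → ℕ} {S : Finset V} {ℓ : ℕ} {v : V}
    (hv : t v ≤ #(G.neighborFinset v ∩ activeSet G t S ℓ)) : v ∈ activeSet G t S (ℓ + 1) :=
  mem_union_right _ (mem_filter.2 ⟨mem_univ v, hv⟩)

lemma card_neighborFinset_inter_le_of_fst_ne {a : GadgetVert G} {B' : Finset (GadgetVert G)}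
    {B : Finset V} (hB : ∀ b ∈ B', b.1 ∈ B)
    (hcross : ∀ b ∈ (gadgetGraph G).neighborFinset a ∩ B', a.1 ≠ b.1) :
    #((gadgetGraph G).neighborFinset a ∩ B') ≤ #(G.neighborFinset a.1 ∩ B) := by
  have hadj : ∀ b ∈ (gadgetGraph G).neighborFinset a ∩ B',
      (a.2 : ℕ) = 0 ∧ (b.2 : ℕ) = 0 ∧ G.Adj a.1 b.1 := fun b hb =>
    gadgetGraph_adj_of_fst_ne G ((SimpleGraph.mem_neighborFinset _ _ _).1 (mem_inter.1 hb).1)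
      (hcross b hb)
  refine card_le_card_of_injOn Sigma.fst (fun b hb => ?_) ?_
  · exact mem_inter.2 ⟨(G.mem_neighborFinset _ _).2 (hadj b hb).2.2, hB b (mem_inter.1 hb).2⟩
  · rintro ⟨v, i⟩ hb ⟨w, j⟩ hc (rfl : v = w)
    have hi := (hadj _ hb).2.1
    have hj := (hadj _ hc).2.1
    exact Sigma.ext rfl (heq_of_eq (Fin.ext (hi.trans hj.symm)))

theorem fst_mem_activeSet_of_mem_activeVec {t : V → ℕ} (ht : ∀ v, 1 ≤ t v)
    (s : GadgetVert G → ℕ) (ℓ : ℕ) :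
    ∀ a ∈ activeVec (gadgetGraph G) (gadgetThreshold G t) s ℓ,
      a.1 ∈ activeSet G t (gadgetSupport G s) ℓ := by
  induction ℓ with
  | zero =>
    intro a ha
    by_contra hS
    have hthr := (mem_filter.1 ha).2
    rw [eq_zero_of_fst_notMem_gadgetSupport G hS] at hthr
    exact absurd (gadgetThreshold_pos G ht a) (by omega)
  | succ ℓ ih =>
    intro a ha
    by_cases hS : a.1 ∈ gadgetSupport G s
    · exact subset_activeSet G t _ _ hS
    rcases mem_union.1 ha with ha | ha
    · exact activeSet_mono G t _ ℓ.le_succ (ih a ha)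
    have hthr := (mem_filter.1 ha).2
    rw [eq_zero_of_fst_notMem_gadgetSupport G hS, Nat.sub_zero] at hthr
    by_cases hsame : ∃ b ∈ (gadgetGraph G).neighborFinset a ∩
        activeVec (gadgetGraph G) (gadgetThreshold G t) s ℓ, a.1 = b.1
    · obtain ⟨b, hb, hab⟩ := hsame
      exact activeSet_mono G t _ ℓ.le_succ (hab ▸ ih b (mem_inter.1 hb).2)
    push Not at hsame
    have hcard := hthr.trans (card_neighborFinset_inter_le_of_fst_ne G ih hsame)
    obtain ⟨b, hb⟩ := card_pos.1 ((gadgetThreshold_pos G ht a).trans hthr)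
    have ha0 := (gadgetGraph_adj_of_fst_ne G
      ((SimpleGraph.mem_neighborFinset _ _ _).1 (mem_inter.1 hb).1) (hsame b hb)).1
    rw [gadgetThreshold, if_pos ha0] at hcard
    exact mem_activeSet_succ_of_le_card G hcard

end Gadget

lemma card_filter_exists_pos_le_sum {ι : Type*} [Fintype ι] {β : ι → Type*}
    [∀ i, Fintype (β i)] (f : (Σ i, β i) → ℕ) [DecidablePred fun i => ∃ j, 0 < f ⟨i, j⟩] :
    #(univ.filter fun i => ∃ j, 0 < f ⟨i, j⟩) ≤ ∑ a, f a := by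
  calc #(univ.filter fun i => ∃ j, 0 < f ⟨i, j⟩)
      = ∑ i ∈ univ.filter fun i => ∃ j, 0 < f ⟨i, j⟩, 1 := card_eq_sum_ones _
    _ ≤ ∑ i ∈ univ.filter fun i => ∃ j, 0 < f ⟨i, j⟩, ∑ j, f ⟨i, j⟩ := by
        refine sum_le_sum fun i hi => ?_
        obtain ⟨j, hj⟩ := (mem_filter.1 hi).2
        exact hj.trans_le
          (single_le_sum (f := fun j => f ⟨i, j⟩) (fun _ _ => Nat.zero_le _) (mem_univ j))
    _ ≤ ∑ i, ∑ j, f ⟨i, j⟩ := sum_le_sum_of_subset (subset_univ _)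
    _ = ∑ a, f a := (Fintype.sum_sigma f).symm

/-- If `s` is a target vector for the gadget graph `G'`, then
`S = {v ∈ V : ∃ u ∈ V'_v, s(u) > 0}` is a target set for `G`, with `|S| ≤ ∑_{u∈V'} s(u)`. -/
theorem gadget_target_vector_to_target_set {V : Type*} [Fintype V] [DecidableEq V]
    (G : SimpleGraph V) [DecidableRel G.Adj] (t : V → ℕ)
    (ht : ∀ v, 1 ≤ t v ∧ t v ≤ G.degree v)
    (s : GadgetVert G → ℕ)
    (hs : isTargetVec (gadgetGraph G) (gadgetThreshold G t) s) :
    isTargetSet G t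
      (Finset.univ.filter fun v => ∃ i : Fin (G.degree v + 2), 0 < s ⟨v, i⟩) ∧
    (Finset.univ.filter fun v => ∃ i : Fin (G.degree v + 2), 0 < s ⟨v, i⟩).card ≤
      ∑ a : GadgetVert G, s a := by
  refine ⟨?_, card_filter_exists_pos_le_sum s⟩
  obtain ⟨ℓ, hℓ⟩ := hs
  refine ⟨ℓ, eq_univ_of_forall fun v => ?_⟩
  have hv' : (⟨v, 0⟩ : GadgetVert G) ∈ activeVec (gadgetGraph G) (gadgetThreshold G t) s ℓ :=
    hℓ ▸ mem_univ _
  exact fst_mem_activeSet_of_mem_activeVec G (fun v => (ht v).1) s ℓ _ hv'
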